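/- Let n ≥ 2 be an integer and a₀, a, b positive reals. Define ρ₀ = (n-1)(a₀² - (a-b)²)/(2 a₀ a b), ρ_ε = (2(n-1)a₀ b + a² - b² - a₀²)/(2 a₀ a b), and ϱ_ε = (2(n-1)a₀ a - a² + b² - a₀²)/(2 a₀ a b). Then ρ₀ = ρ_ε = ϱ_ε if and only if a = b = n a₀ / (2(n-1)). -/
import Mathlib


/-- the Einstein condition for the invariant metric `g^{a₀,a,b}`. -/
theorem einstein_condition_iff (n : ℕ) (hn : 2 ≤ n) (a₀ a b : ℝ)
    (ha₀ : 0 < a₀) (ha : 0 < a) (hb : 0 < b) :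
    ((n-1 : ℝ)*(a₀^2 - (a - b)^2) / (2*a₀*a*b)
        = (2*(n-1 : ℝ)*a₀*b + a^2 - b^2 - a₀^2) / (2*a₀*a*b)
      ∧ (2*(n-1 : ℝ)*a₀*b + a^2 - b^2 - a₀^2) / (2*a₀*a*b)
        = (2*(n-1 : ℝ)*a₀*a - a^2 + b^2 - a₀^2) / (2*a₀*a*b)) ↔
    (a = n * a₀ / (2*(n-1 : ℝ)) ∧ b = n * a₀ / (2*(n-1 : ℝ))) := by
  have hN : (2:ℝ) ≤ (n:ℝ) := by exact_mod_cast hn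
  have hN1 : (0:ℝ) < (n:ℝ) - 1 := by linarith
  have hD : (0:ℝ) < 2*a₀*a*b := by positivity
  constructor
  · rintro ⟨h1, h2⟩
    rw [div_eq_div_iff hD.ne' hD.ne'] at h1 h2
    have h1n : ((n:ℝ)-1)*(a₀^2 - (a - b)^2)
        = 2*((n:ℝ)-1)*a₀*b + a^2 - b^2 - a₀^2 := by
      have := mul_right_cancel₀ hD.ne' h1
      linarith
    have h2n : 2*((n:ℝ)-1)*a₀*b + a^2 - b^2 - a₀^2
        = 2*((n:ℝ)-1)*a₀*a - a^2 + b^2 - a₀^2 := by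
      have := mul_right_cancel₀ hD.ne' h2
      linarith
    by_cases hab : a = b
    · subst hab
      have key : a₀ * ((n:ℝ)*a₀ - 2*((n:ℝ)-1)*a) = 0 := by linear_combination h1n
      have key2 : (n:ℝ)*a₀ - 2*((n:ℝ)-1)*a = 0 :=
        (mul_eq_zero.mp key).resolve_left ha₀.ne'
      have hval : a = (n:ℝ) * a₀ / (2*((n:ℝ)-1)) := by
        rw [eq_div_iff (ne_of_gt (by linarith : (0:ℝ) < 2*((n:ℝ)-1)))]
        linarith
      exact ⟨hval, hval⟩
    · exfalso
      have hf : (b - a) * (((n:ℝ)-1)*a₀ - (a+b)) = 0 := by linear_combination h2n / 2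
      have h3 : ((n:ℝ)-1)*a₀ - (a+b) = 0 := by
        rcases mul_eq_zero.mp hf with h | h
        · exact absurd (by linarith) hab
        · exact h
      have hd2 : 0 < (a-b)^2 := by
        have h0 : a - b ≠ 0 := sub_ne_zero.mpr hab
        positivity
      rcases eq_or_lt_of_le hn with h2' | h3'
    -- n = 2
      · have hN2 : (n:ℝ) = 2 := by rw [← h2']; norm_num
        rw [hN2] at h1n h3
        have ha₀' : a₀ = a + b := by linarith
        subst ha₀'
        nlinarith [mul_pos ha hb, h1n]
      · have hN3 : (3:ℝ) ≤ (n:ℝ) := by exact_mod_cast h3'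
        have key : ((n:ℝ)^2 - 3*(n:ℝ) + 1)*(a+b)^2 + ((n:ℝ)-1)^3*(a-b)^2 = 0 := by
          linear_combination (-(((n:ℝ)-1)^2)) * h1n
            + ((n:ℝ)*(2*(a+b) + (((n:ℝ)-1)*a₀ - (a+b))) - 2*b*((n:ℝ)-1)^2) * h3
        have t1 : 0 ≤ ((n:ℝ)^2 - 3*(n:ℝ) + 1)*(a+b)^2 :=
          mul_nonneg (by nlinarith) (sq_nonneg _)
        have t2 : 0 < ((n:ℝ)-1)^3*(a-b)^2 := by positivity
        linarith
  · rintro ⟨ha', hb'⟩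
    subst ha' hb'
    constructor <;> · congr 1; field_simp; ring
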